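/- For all odd integers a, b and ε ∈ {±1}, the identity F_a² − F_{b−εa}² + F_b² + F_a·F_{b−εa}·L_b − F_a·F_b·L_{a+εb} − ε·F_{b−εa}·F_b·L_a + ε·F_a·F_b·L_a·L_b = 0 holds. -/

import Mathlib

/-!
Binet's formulas `F_n = (φ ^ n - ψ ^ n) / √5` and `L_n = φ ^ n + ψ ^ n` hold for every integer `n`,
and for odd `n` the relation `φ ψ = -1` gives `ψ ^ n = -(φ ^ n)⁻¹`. Splitting the powers at
`b - ε a` and `a + ε b` into powers at `a` and `b` turns the identity into one between rational
functions of `x = φ ^ a` and `y = φ ^ b`; every term has exactly two Fibonacci factors, so `√5`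
only occurs squared.
-/

/-- Fibonacci numbers extended to all integer indices. -/
def fibZ : ℤ → ℤ
  | Int.ofNat n => Nat.fib n
  | Int.negSucc n => (-1) ^ n * Nat.fib (n + 1)

/-- Lucas numbers extended to all integer indices: `L_n = F_{n−1} + F_{n+1}`. -/
def lucZ (n : ℤ) : ℤ := fibZ (n - 1) + fibZ (n + 1)

open Real goldenRatio

lemma fibZ_eq_intFib (n : ℤ) : fibZ n = Int.fib n := by
  cases n with
  | ofNat k => rfl
  | negSucc k =>
    change (-1) ^ k * (Nat.fib (k + 1) : ℤ) = _
    rw [Int.negSucc_eq, ← Nat.cast_add_one, Int.fib_neg_natCast, pow_succ, pow_succ]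
    ring

lemma coe_fibZ_eq (n : ℤ) : (fibZ n : ℝ) = (φ ^ n - ψ ^ n) / √5 := by
  rw [fibZ_eq_intFib, coe_intFib_eq]

lemma coe_lucZ_eq (n : ℤ) : (lucZ n : ℝ) = φ ^ n + ψ ^ n := by
  rw [lucZ, Int.cast_add, coe_fibZ_eq, coe_fibZ_eq, zpow_sub_one₀ goldenRatio_ne_zero,
    zpow_sub_one₀ goldenConj_ne_zero, zpow_add_one₀ goldenRatio_ne_zero,
    zpow_add_one₀ goldenConj_ne_zero, inv_goldenRatio, inv_goldenConj,
    ← goldenRatio_sub_goldenConj]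
  field_simp
  linear_combination φ ^ n * goldenRatio_sq - φ ^ n / 4 * sq_sqrt (show (0 : ℝ) ≤ 5 by norm_num)

lemma goldenConj_zpow_of_odd {n : ℤ} (hn : Odd n) : ψ ^ n = -(φ ^ n)⁻¹ := by
  rw [← neg_neg ψ, ← inv_goldenRatio, hn.neg_zpow, inv_zpow]

/-- the Fibonacci–Lucas identity
`F_a² − F_{b−εa}² + F_b² + F_a F_{b−εa} L_b − F_a F_b L_{a+εb}
  − ε F_{b−εa} F_b L_a + ε F_a F_b L_a L_b = 0`
for all odd integers `a, b` and `ε = ±1`. -/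
theorem stmt18 (a b ε : ℤ) (ha : Odd a) (hb : Odd b) (hε : ε = 1 ∨ ε = -1) :
    fibZ a ^ 2 - fibZ (b - ε * a) ^ 2 + fibZ b ^ 2
      + fibZ a * fibZ (b - ε * a) * lucZ b
      - fibZ a * fibZ b * lucZ (a + ε * b)
      - ε * fibZ (b - ε * a) * fibZ b * lucZ a
      + ε * fibZ a * fibZ b * lucZ a * lucZ b = 0 := by
  have hφ : φ ≠ 0 := goldenRatio_ne_zero
  have hψ : ψ ≠ 0 := goldenConj_ne_zero
  have hx : φ ^ a ≠ 0 := zpow_ne_zero a hφ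
  have hy : φ ^ b ≠ 0 := zpow_ne_zero b hφ
  refine Int.cast_injective (α := ℝ) ?_
  rcases hε with rfl | rfl
  all_goals
    push_cast
    simp only [coe_fibZ_eq, coe_lucZ_eq, one_mul, neg_one_mul, sub_neg_eq_add, zpow_neg,
      zpow_add₀ hφ, zpow_sub₀ hφ, zpow_add₀ hψ, zpow_sub₀ hψ,
      goldenConj_zpow_of_odd ha, goldenConj_zpow_of_odd hb]
    generalize φ ^ a = x at *
    generalize φ ^ b = y at *
    field_simp
    ring
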